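/- Let L > 0, β₀ > 0. Let θ₀ = 1 and, for k ≥ 1, θ_k ∈ (0,1) satisfy (1 − θ_k)/θ_k² = 1/θ_{k−1}²; set ϑ_k = θ_k², and let ε_k ≥ 0 for k ≥ 0. Let (x*, λ*) satisfy Πx* = 0 and ∇f(x*) + Πλ* = 0. Let (x^k)_{k≥−1} ⊂ ℝ^{m×n} with x^{−1} = x⁰ satisfy, for every k ≥ 0: y^k = x^k + θ_k·((1 − θ_{k−1})/θ_{k−1})·(x^k − x^{k−1}) (so y⁰ = x⁰), z^k = y^k − (1/L)∇f(y^k), and there exists δ^k with ‖δ^k‖_F ≤ √(2ε_k/L), (β₀/ϑ_k)‖Πδ^k‖²_F ≤ 2ε_k and L(x^{k+1} − z^k + δ^k) + (β₀/ϑ_k)Π(x^{k+1} + δ^k) = 0. Define w⁰ = x⁰ and, for k ≥ 1, w^k = x^k/θ_{k−1} − ((1 − θ_{k−1})/θ_{k−1})·x^{k−1}; define ρ_k = f(x^k) − f(x*) + ⟨λ*, Πx^k⟩; define ℓ₀² = ‖λ*‖²_F/(2β₀) + (L/2)‖x⁰ − x*‖²_F and, for k ≥ 1, ℓ_k² = ρ_k/θ_{k−1}²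 + (1/(2β₀))‖(β₀/θ_{k−1}²)Πx^k − λ*‖²_F + (L/2)‖w^k − x*‖²_F. Then for every K ≥ 0: ℓ_{K+1}² ≤ ( Σ_{k=1}^{K+1} 2√(ε_{k−1})/θ_{k−1} )² + 2·Σ_{k=0}^{K} ε_k/θ_k² + 2ℓ₀². -/

import Mathlib

/-!
Write `λ̂ᵏ = (β₀ / θ_{k-1}²) Π xᵏ` (with `λ̂⁰ = 0`) for the multiplier produced implicitly by the
penalty step. Thanks to the recursion for `θ`, both formulas for `ℓ_k²` are the Lyapunov function
`((1 - θ_k) / θ_k²) ρ_k + ‖λ̂ᵏ - λ*‖² / (2β₀) + (L/2) ‖wᵏ - x*‖²`. One step of the method, comparing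
`f(x^{k+1})` with `f` at `u = θ_k x* + (1 - θ_k) xᵏ` through smoothness and convexity and using the
optimality condition of the inexact subproblem, gives
`ℓ_{k+1}² ≤ ℓ_k² + ε_k / θ_k² + (2√ε_k / θ_k) ℓ_{k+1}`; the inexactness is absorbed by Young's
inequality for `Πδᵏ` and by Cauchy–Schwarz for `δᵏ`. Summing, and bounding every `ℓ_j` with
`j ≤ K + 1` by the largest one `M`, gives `M² ≤ 2 (ℓ₀² + Σ ε_k / θ_k²) + (Σ 2√ε_k / θ_k) M`.
-/

open scoped RealInnerProductSpace

/-- The column-average operator `x ↦ (1/m)·1 1ᵀ x` on `ℝ^{m×n}`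
(viewed as a Euclidean space with the Frobenius inner product). -/
noncomputable def colAvg (m n : ℕ) (x : EuclideanSpace ℝ (Fin m × Fin n)) :
    EuclideanSpace ℝ (Fin m × Fin n) :=
  WithLp.toLp 2 (fun p => (m : ℝ)⁻¹ * ∑ k : Fin m, x (k, p.2))

/-- The operator `Π = I − (1/m)·1 1ᵀ` acting on `ℝ^{m×n}`. -/
noncomputable def cProj (m n : ℕ) (x : EuclideanSpace ℝ (Fin m × Fin n)) :
    EuclideanSpace ℝ (Fin m × Fin n) :=
  x - colAvg m n x

section InnerProductSpace

variable {E : Type*} [NormedAddCommGroup E] [InnerProductSpace ℝ E] {f : E → ℝ} {g : E → E}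
  {P : E →ₗ[ℝ] E}

theorem real_inner_self_sub (p q : E) :
    ⟪p, p - q⟫ = (‖p‖ ^ 2 + ‖p - q‖ ^ 2 - ‖q‖ ^ 2) / 2 := by
  rw [norm_sub_sq_real, inner_sub_right, real_inner_self_eq_norm_sq]
  ring

theorem neg_real_inner_le_young {c : ℝ} (hc : 0 < c) (v w : E) :
    -⟪v, w⟫ ≤ ‖v‖ ^ 2 / (2 * c) + c / 2 * ‖w‖ ^ 2 := by
  have hcs : -⟪v, w⟫ ≤ ‖v‖ * ‖w‖ := neg_le.mp (neg_le_of_abs_le (abs_real_inner_le_norm v w))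
  have hamgm : ‖v‖ * ‖w‖ ≤ ‖v‖ ^ 2 / (2 * c) + c / 2 * ‖w‖ ^ 2 := by
    rw [show ‖v‖ ^ 2 / (2 * c) + c / 2 * ‖w‖ ^ 2 = (‖v‖ ^ 2 + c ^ 2 * ‖w‖ ^ 2) / (2 * c) by
      field_simp, le_div_iff₀ (by positivity)]
    nlinarith [sq_nonneg (‖v‖ - c * ‖w‖)]
  linarith

theorem neg_mul_real_inner_le {L ε V : ℝ} (hL : 0 < L) (hε : 0 ≤ ε) {δ v : E}
    (hδ : ‖δ‖ ≤ √(2 * ε / L)) (hv : L / 2 * ‖v‖ ^ 2 ≤ V) :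
    -(L * ⟪δ, v⟫) ≤ 2 * √ε * √V := by
  have hV : 0 ≤ V := le_trans (by positivity) hv
  have hv' : ‖v‖ ≤ √(2 * V / L) := by
    rw [Real.le_sqrt (norm_nonneg _) (div_nonneg (by linarith) hL.le), le_div_iff₀ hL]
    linarith
  calc -(L * ⟪δ, v⟫) ≤ L * (‖δ‖ * ‖v‖) := by
        rw [← mul_neg]
        gcongr
        exact neg_le.mp (neg_le_of_abs_le (abs_real_inner_le_norm δ v))
    _ ≤ L * (√(2 * ε / L) * √(2 * V / L)) := by gcongr
    _ = 2 * √ε * √V := by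
        rw [← Real.sqrt_mul (by positivity : 0 ≤ 2 * ε / L),
          show 2 * ε / L * (2 * V / L) = (2 / L) ^ 2 * (ε * V) by ring,
          Real.sqrt_mul (by positivity), Real.sqrt_sq (by positivity), Real.sqrt_mul hε]
        field_simp

theorem le_convex_comb_of_gradient (hconv : ∀ a b, f a + ⟪g a, b - a⟫ ≤ f b) {t : ℝ}
    (ht0 : 0 ≤ t) (ht1 : t ≤ 1) (a b : E) :
    f (t • a + (1 - t) • b) ≤ t * f a + (1 - t) * f b := by
  set u := t • a + (1 - t) • b
  have hsum : t * ⟪g u, a - u⟫ + (1 - t) * ⟪g u, b - u⟫ = 0 := by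
    rw [← real_inner_smul_right, ← real_inner_smul_right, ← inner_add_right,
      show t • (a - u) + (1 - t) • (b - u) = 0 by module, inner_zero_right]
  linarith [mul_le_mul_of_nonneg_left (hconv u a) ht0,
    mul_le_mul_of_nonneg_left (hconv u b) (sub_nonneg.2 ht1)]

theorem le_convex_comb_add_inner_of_smooth (hconv : ∀ a b, f a + ⟪g a, b - a⟫ ≤ f b) {L : ℝ}
    (hsmooth : ∀ a b, f b ≤ f a + ⟪g a, b - a⟫ + L / 2 * ‖b - a‖ ^ 2) {t : ℝ}
    (ht0 : 0 ≤ t) (ht1 : t ≤ 1) (a b y x : E) :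
    f x ≤ t * f a + (1 - t) * f b + ⟪g y, x - (t • a + (1 - t) • b)⟫
      + L / 2 * ‖x - y‖ ^ 2 := by
  have hsplit : ⟪g y, x - y⟫ = ⟪g y, x - (t • a + (1 - t) • b)⟫
      + ⟪g y, t • a + (1 - t) • b - y⟫ := by
    rw [← inner_add_right, sub_add_sub_cancel]
  linarith [hsmooth y x, hconv y (t • a + (1 - t) • b),
    le_convex_comb_of_gradient hconv ht0 ht1 a b]

theorem lagrangian_gap_nonneg (hP : P.IsSymmetric)
    (hconv : ∀ a b, f a + ⟪g a, b - a⟫ ≤ f b) {xs lam : E} (hxs : P xs = 0)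
    (hlam : g xs + P lam = 0) (x : E) :
    0 ≤ f x - f xs + ⟪lam, P x⟫ := by
  have hgrad : ⟪g xs, x - xs⟫ = -⟪lam, P x⟫ := by
    rw [eq_neg_of_add_eq_zero_left hlam, inner_neg_left, hP, map_sub, hxs, sub_zero]
  linarith [hconv xs x]

theorem inner_apply_eq_inner_apply_apply (hP : P.IsSymmetric) (hPP : IsIdempotentElem P)
    (a b : E) : ⟪P a, b⟫ = ⟪P a, P b⟫ := by
  rw [← hP (P a) b, ← Module.End.mul_apply, hPP.eq]

theorem le_inv_mul_inner_apply_add (hP : P.IsSymmetric) (hPP : IsIdempotentElem P) {c ε : ℝ}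
    (hc : 0 < c) {x δ v μ μ' lam : E} (hPv : P v = c • (μ' - μ)) (hPx : P x = c • μ')
    (hδ : ‖P δ‖ ^ 2 / c ≤ 2 * ε) :
    c / 2 * (‖μ' - lam‖ ^ 2 - ‖μ - lam‖ ^ 2) + c * ⟪lam, μ' - μ⟫ - ε
      ≤ c⁻¹ * ⟪P (x + δ), v⟫ := by
  have hexpand : c⁻¹ * ⟪P (x + δ), v⟫
      = c * ⟪μ' - lam, μ' - μ⟫ + c * ⟪lam, μ' - μ⟫ + ⟪P δ, μ' - μ⟫ := by
    rw [inner_apply_eq_inner_apply_apply hP hPP, hPv, map_add, hPx, inner_add_left,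
      real_inner_smul_left, real_inner_smul_right, real_inner_smul_right, inner_sub_left]
    field_simp
    ring
  have hthree := real_inner_self_sub (μ' - lam) (μ - lam)
  rw [sub_sub_sub_cancel_right] at hthree
  have hyoung := neg_real_inner_le_young hc (P δ) (μ' - μ)
  have hδ' : ‖P δ‖ ^ 2 / (2 * c) ≤ ε := by rw [mul_comm, ← div_div]; linarith
  rw [hexpand, hthree]
  linarith

theorem neg_mul_inner_add_half_norm_sq_eq (L θ : ℝ) (p q δ : E) :
    -(L * ⟪θ • (p - q) + δ, θ • p⟫) + L / 2 * ‖θ • (p - q)‖ ^ 2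
      = L * θ ^ 2 / 2 * (‖q‖ ^ 2 - ‖p‖ ^ 2) - L * θ * ⟪δ, p⟫ := by
  rw [inner_add_left, real_inner_smul_left, real_inner_smul_right, real_inner_smul_right,
    real_inner_comm, real_inner_self_sub, norm_smul, mul_pow, Real.norm_eq_abs, sq_abs]
  ring

theorem penalty_step (hP : P.IsSymmetric) (hPP : IsIdempotentElem P)
    (hconv : ∀ a b, f a + ⟪g a, b - a⟫ ≤ f b) {L : ℝ}
    (hsmooth : ∀ a b, f b ≤ f a + ⟪g a, b - a⟫ + L / 2 * ‖b - a‖ ^ 2) (hL : 0 < L)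
    {xs lam : E} (hxs : P xs = 0) {θ β ε : ℝ} (hθ0 : 0 < θ) (hθ1 : θ ≤ 1) (hβ : 0 < β)
    {x x' y w w' δ μ μ' : E} (hy : y = (1 - θ) • x + θ • w) (hx' : x' = (1 - θ) • x + θ • w')
    (hμ : (1 - θ) • P x = (θ ^ 2 / β) • μ) (hμ' : P x' = (θ ^ 2 / β) • μ')
    (hopt : L • (x' - (y - L⁻¹ • g y) + δ) + (β / θ ^ 2) • P (x' + δ) = 0)
    (hδ : β / θ ^ 2 * ‖P δ‖ ^ 2 ≤ 2 * ε) :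
    f x' - f xs + ⟪lam, P x'⟫
      ≤ (1 - θ) * (f x - f xs + ⟪lam, P x⟫) + θ ^ 2 / (2 * β) * (‖μ - lam‖ ^ 2 - ‖μ' - lam‖ ^ 2)
        + ε + L * θ ^ 2 / 2 * (‖w - xs‖ ^ 2 - ‖w' - xs‖ ^ 2) - L * θ * ⟪δ, w' - xs⟫ := by
  have hdesc := le_convex_comb_add_inner_of_smooth hconv hsmooth hθ0.le hθ1 xs x y x'
  have hxu : x' - (θ • xs + (1 - θ) • x) = θ • (w' - xs) := by rw [hx']; module
  have hxy : x' - y = θ • ((w' - xs) - (w - xs)) := by rw [hx', hy]; module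
  have hgrad : g y = -(L • (θ • ((w' - xs) - (w - xs)) + δ)) - (β / θ ^ 2) • P (x' + δ) := by
    have hcancel : L • L⁻¹ • g y = g y := smul_inv_smul₀ hL.ne' _
    rw [← hxy]
    linear_combination (norm := module) hopt - hcancel
  have hPv : P (x' - (θ • xs + (1 - θ) • x)) = (θ ^ 2 / β) • (μ' - μ) := by
    rw [map_sub, map_add, map_smul, map_smul, hxs, smul_zero, zero_add, hμ, hμ', smul_sub]
  have hpen := le_inv_mul_inner_apply_add hP hPP (lam := lam) (by positivity) hPv hμ'
    (by convert hδ using 1; field_simp)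
  have hdual : θ ^ 2 / β * ⟪lam, μ' - μ⟫ = ⟪lam, P x'⟫ - (1 - θ) * ⟪lam, P x⟫ := by
    rw [← real_inner_smul_right, smul_sub, ← hμ', ← hμ, inner_sub_right, real_inner_smul_right]
  have hsm := neg_mul_inner_add_half_norm_sq_eq L θ (w' - xs) (w - xs) δ
  rw [hgrad, inner_sub_left, inner_neg_left, real_inner_smul_left, real_inner_smul_left, hxy,
    hxu] at hdesc
  rw [inv_div, hxu, div_div, mul_comm β 2] at hpen
  linarith

theorem lyapunov_step (hP : P.IsSymmetric) (hPP : IsIdempotentElem P)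
    (hconv : ∀ a b, f a + ⟪g a, b - a⟫ ≤ f b) {L : ℝ}
    (hsmooth : ∀ a b, f b ≤ f a + ⟪g a, b - a⟫ + L / 2 * ‖b - a‖ ^ 2) (hL : 0 < L)
    {xs lam : E} (hxs : P xs = 0) (hlam : g xs + P lam = 0) {θ β ε : ℝ} (hθ0 : 0 < θ)
    (hθ1 : θ ≤ 1) (hβ : 0 < β) (hε : 0 ≤ ε)
    {x x' y w w' δ μ μ' : E} (hy : y = (1 - θ) • x + θ • w) (hx' : x' = (1 - θ) • x + θ • w')
    (hμ : (1 - θ) • P x = (θ ^ 2 / β) • μ) (hμ' : P x' = (θ ^ 2 / β) • μ')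
    (hopt : L • (x' - (y - L⁻¹ • g y) + δ) + (β / θ ^ 2) • P (x' + δ) = 0)
    (hPδ : β / θ ^ 2 * ‖P δ‖ ^ 2 ≤ 2 * ε) (hδ : ‖δ‖ ≤ √(2 * ε / L)) {ρ ρ' : ℝ}
    (hρ : ρ = f x - f xs + ⟪lam, P x⟫) (hρ' : ρ' = f x' - f xs + ⟪lam, P x'⟫) :
    ρ' / θ ^ 2 + 1 / (2 * β) * ‖μ' - lam‖ ^ 2 + L / 2 * ‖w' - xs‖ ^ 2
      ≤ (1 - θ) / θ ^ 2 * ρ + 1 / (2 * β) * ‖μ - lam‖ ^ 2 + L / 2 * ‖w - xs‖ ^ 2 + ε / θ ^ 2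
        + 2 * √ε / θ * √(ρ' / θ ^ 2 + 1 / (2 * β) * ‖μ' - lam‖ ^ 2 + L / 2 * ‖w' - xs‖ ^ 2) := by
  set V' := ρ' / θ ^ 2 + 1 / (2 * β) * ‖μ' - lam‖ ^ 2 + L / 2 * ‖w' - xs‖ ^ 2
  have hstep := penalty_step hP hPP hconv hsmooth hL hxs (lam := lam) hθ0 hθ1 hβ hy hx' hμ hμ'
    hopt hPδ
  rw [← hρ, ← hρ'] at hstep
  have hρ'0 : 0 ≤ ρ' := hρ' ▸ lagrangian_gap_nonneg hP hconv hxs hlam x'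
  have herr := neg_mul_real_inner_le hL hε hδ (v := w' - xs) (V := V')
    (le_add_of_nonneg_left (by positivity))
  refine le_of_mul_le_mul_left ?_ (by positivity : 0 < θ ^ 2)
  have hlhs : θ ^ 2 * V' = ρ' + θ ^ 2 / (2 * β) * ‖μ' - lam‖ ^ 2
      + L * θ ^ 2 / 2 * ‖w' - xs‖ ^ 2 := by
    simp only [V']; field_simp
  have hrhs : θ ^ 2 * ((1 - θ) / θ ^ 2 * ρ + 1 / (2 * β) * ‖μ - lam‖ ^ 2 + L / 2 * ‖w - xs‖ ^ 2
      + ε / θ ^ 2 + 2 * √ε / θ * √V') = (1 - θ) * ρ + θ ^ 2 / (2 * β) * ‖μ - lam‖ ^ 2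
      + L * θ ^ 2 / 2 * ‖w - xs‖ ^ 2 + ε + θ * (2 * √ε * √V') := by
    field_simp
  rw [hlhs, hrhs]
  linarith [mul_le_mul_of_nonneg_left herr hθ0.le]

end InnerProductSpace

section Momentum

variable {V : Type*} [AddCommGroup V] [Module ℝ V] {θ : ℕ → ℝ} {x y w : ℕ → V}

theorem iterate_succ_eq_convex_comb {k : ℕ} (hθ : θ k ≠ 0)
    (hw : w (k + 1) = (θ k)⁻¹ • x (k + 1) - ((1 - θ k) / θ k) • x k) :
    x (k + 1) = (1 - θ k) • x k + θ k • w (k + 1) := by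
  rw [hw, smul_sub, smul_smul, smul_smul, mul_inv_cancel₀ hθ, mul_div_cancel₀ _ hθ, one_smul]
  abel

theorem extrapolation_eq_convex_comb (hθ0 : θ 0 = 1) (hθ : ∀ k, θ k ≠ 0)
    (hy : ∀ k, y k = x k + (θ k * ((1 - θ (k - 1)) / θ (k - 1))) • (x k - x (k - 1)))
    (hw0 : w 0 = x 0) (hw : ∀ k, w (k + 1) = (θ k)⁻¹ • x (k + 1) - ((1 - θ k) / θ k) • x k) :
    ∀ k, y k = (1 - θ k) • x k + θ k • w k
  | 0 => by simp [hy 0, hθ0, hw0]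
  | k + 1 => by
    rw [hy, hw, Nat.add_sub_cancel]
    match_scalars <;> field_simp [hθ k]
    ring

end Momentum

theorem le_add_sum_of_le_add_mul_sqrt {u b c : ℕ → ℝ}
    (h : ∀ k, u (k + 1) ≤ u k + b k + c k * √(u (k + 1))) (j : ℕ) :
    u j ≤ u 0 + ∑ k ∈ Finset.range j, b k + ∑ k ∈ Finset.range j, c k * √(u (k + 1)) := by
  induction j with
  | zero => simp
  | succ j ih =>
    rw [Finset.sum_range_succ, Finset.sum_range_succ]
    linarith [h j]

theorem le_sq_sum_add_of_le_add_mul_sqrt {u b c : ℕ → ℝ} (hu : ∀ k, 0 ≤ u k)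
    (hb : ∀ k, 0 ≤ b k) (hc : ∀ k, 0 ≤ c k)
    (h : ∀ k, u (k + 1) ≤ u k + b k + c k * √(u (k + 1))) (K : ℕ) :
    u K ≤ (∑ k ∈ Finset.range K, c k) ^ 2 + 2 * ∑ k ∈ Finset.range K, b k + 2 * u 0 := by
  obtain ⟨j, hj, hmax⟩ := (Finset.range (K + 1)).exists_max_image u ⟨K, by simp⟩
  have hjK : j ≤ K := Nat.lt_succ_iff.mp (Finset.mem_range.mp hj)
  have hsub : Finset.range j ⊆ Finset.range K := Finset.range_subset_range.mpr hjK
  set M := √(u j)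
  have hbsum : ∑ k ∈ Finset.range j, b k ≤ ∑ k ∈ Finset.range K, b k :=
    Finset.sum_le_sum_of_subset_of_nonneg hsub fun k _ _ => hb k
  have hcsum : ∑ k ∈ Finset.range j, c k * √(u (k + 1)) ≤ (∑ k ∈ Finset.range K, c k) * M := by
    calc ∑ k ∈ Finset.range j, c k * √(u (k + 1)) ≤ ∑ k ∈ Finset.range j, c k * M := by
          refine Finset.sum_le_sum fun k hk => mul_le_mul_of_nonneg_left ?_ (hc k)
          refine Real.sqrt_le_sqrt (hmax _ (Finset.mem_range.mpr ?_))
          have := Finset.mem_range.mp hk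
          omega
      _ ≤ ∑ k ∈ Finset.range K, c k * M :=
          Finset.sum_le_sum_of_subset_of_nonneg hsub fun k _ _ =>
            mul_nonneg (hc k) (Real.sqrt_nonneg _)
      _ = (∑ k ∈ Finset.range K, c k) * M := (Finset.sum_mul ..).symm
  have hM : M ^ 2 = u j := Real.sq_sqrt (hu j)
  have hcum := le_add_sum_of_le_add_mul_sqrt h j
  have hK := hmax K (by simp)
  nlinarith [sq_nonneg (M - ∑ k ∈ Finset.range K, c k)]

theorem theta_pos_le_one {θ : ℕ → ℝ} (hθ0 : θ 0 = 1) (hθ : ∀ k, 0 < θ (k + 1) ∧ θ (k + 1) < 1) :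
    ∀ k, 0 < θ k ∧ θ k ≤ 1
  | 0 => by simp [hθ0]
  | k + 1 => ⟨(hθ k).1, (hθ k).2.le⟩

section Consensus

variable (m n : ℕ)

noncomputable def colAvgₗ :
    EuclideanSpace ℝ (Fin m × Fin n) →ₗ[ℝ] EuclideanSpace ℝ (Fin m × Fin n) where
  toFun := colAvg m n
  map_add' a b := by ext p; simp [colAvg, Finset.sum_add_distrib, mul_add]
  map_smul' r a := by ext p; simp [colAvg, Finset.mul_sum, mul_left_comm]

noncomputable def cProjₗ :
    EuclideanSpace ℝ (Fin m × Fin n) →ₗ[ℝ] EuclideanSpace ℝ (Fin m × Fin n) :=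
  1 - colAvgₗ m n

theorem inner_colAvg (a b : EuclideanSpace ℝ (Fin m × Fin n)) :
    ⟪colAvg m n a, b⟫ = (m : ℝ)⁻¹ * ∑ j, (∑ k, a (k, j)) * ∑ i, b (i, j) := by
  simp only [PiLp.inner_apply, RCLike.inner_apply, conj_trivial, colAvg,
    Fintype.sum_prod_type_right, Finset.mul_sum, Finset.sum_mul]
  ac_rfl

theorem colAvgₗ_isSymmetric : (colAvgₗ m n).IsSymmetric := fun a b => by
  change ⟪colAvg m n a, b⟫ = ⟪a, colAvg m n b⟫
  rw [inner_colAvg, real_inner_comm, inner_colAvg]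
  simp only [mul_comm]

theorem colAvgₗ_isIdempotentElem : IsIdempotentElem (colAvgₗ m n) := by
  refine LinearMap.ext fun a => ?_
  ext p
  simp only [colAvgₗ, colAvg, Module.End.mul_apply, LinearMap.coe_mk, AddHom.coe_mk,
    PiLp.toLp_apply, Finset.sum_const, Finset.card_univ, Fintype.card_fin, nsmul_eq_mul,
    ← mul_assoc]
  rw [show ((m : ℝ)⁻¹ * m * (m : ℝ)⁻¹) = (m : ℝ)⁻¹ by simpa using mul_inv_mul_cancel ((m : ℝ)⁻¹)]

theorem cProjₗ_isSymmetric : (cProjₗ m n).IsSymmetric :=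
  LinearMap.IsSymmetric.one.sub (colAvgₗ_isSymmetric m n)

theorem cProjₗ_isIdempotentElem : IsIdempotentElem (cProjₗ m n) :=
  (colAvgₗ_isIdempotentElem m n).one_sub

end Consensus

noncomputable def penaltyMultiplier (m n : ℕ) (β₀ : ℝ) (θ : ℕ → ℝ)
    (x : ℕ → EuclideanSpace ℝ (Fin m × Fin n)) : ℕ → EuclideanSpace ℝ (Fin m × Fin n)
  | 0 => 0
  | k + 1 => (β₀ / θ k ^ 2) • cProj m n (x (k + 1))

section PenaltyMultiplier

variable {m n : ℕ} {β₀ : ℝ} {θ : ℕ → ℝ} {x : ℕ → EuclideanSpace ℝ (Fin m × Fin n)}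

theorem cProj_succ_eq_smul_penaltyMultiplier (hβ₀ : β₀ ≠ 0) {k : ℕ} (hθ : θ k ≠ 0) :
    cProj m n (x (k + 1)) = (θ k ^ 2 / β₀) • penaltyMultiplier m n β₀ θ x (k + 1) := by
  simp [penaltyMultiplier, smul_smul, hθ, hβ₀]

theorem smul_cProj_eq_smul_penaltyMultiplier (hβ₀ : β₀ ≠ 0) (hθ0 : θ 0 = 1)
    (hθ : ∀ k, θ k ≠ 0) (hrec : ∀ k, (1 - θ (k + 1)) / θ (k + 1) ^ 2 = 1 / θ k ^ 2) :
    ∀ k, (1 - θ k) • cProj m n (x k) = (θ k ^ 2 / β₀) • penaltyMultiplier m n β₀ θ x k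
  | 0 => by simp [hθ0, penaltyMultiplier]
  | k + 1 => by
    have hcoef : 1 - θ (k + 1) = θ (k + 1) ^ 2 / β₀ * (β₀ / θ k ^ 2) := by
      have h := hrec k
      field_simp [hθ] at h ⊢
      linear_combination h
    simp only [penaltyMultiplier, smul_smul, ← hcoef]

end PenaltyMultiplier

theorem stmt8_general (m n : ℕ) (L β₀ : ℝ) (hL : 0 < L) (hβ₀ : 0 < β₀)
    (θ ε : ℕ → ℝ)
    (hθ0 : θ 0 = 1)
    (hθ : ∀ k : ℕ, 0 < θ (k + 1) ∧ θ (k + 1) < 1 ∧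
      (1 - θ (k + 1)) / (θ (k + 1)) ^ 2 = 1 / (θ k) ^ 2)
    (hε : ∀ k : ℕ, 0 ≤ ε k)
    (f : EuclideanSpace ℝ (Fin m × Fin n) → ℝ)
    (gf : EuclideanSpace ℝ (Fin m × Fin n) → EuclideanSpace ℝ (Fin m × Fin n))
    -- `f` is convex with gradient `gf`
    (hconv : ∀ a b, f a + ⟪gf a, b - a⟫ ≤ f b)
    -- `f` is `L`-smooth with gradient `gf`
    (hsmooth : ∀ a b, f b ≤ f a + ⟪gf a, b - a⟫ + (L / 2) * ‖b - a‖ ^ 2)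
    (xs lam : EuclideanSpace ℝ (Fin m × Fin n))
    (hxs : cProj m n xs = 0) (hlam : gf xs + cProj m n lam = 0)
    (x y z δ w : ℕ → EuclideanSpace ℝ (Fin m × Fin n))
    -- the extrapolation step (with the convention `x^{−1} = x⁰`, via truncated
    -- subtraction `0 - 1 = 0` on `ℕ`; for `k = 0` the coefficient is `0` since `θ₀ = 1`)
    (hy : ∀ k : ℕ, y k = x k + (θ k * ((1 - θ (k - 1)) / θ (k - 1))) • (x k - x (k - 1)))
    (hz : ∀ k : ℕ, z k = y k - L⁻¹ • gf (y k))
    (hδ1 : ∀ k : ℕ, ‖δ k‖ ≤ Real.sqrt (2 * ε k / L))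
    (hδ2 : ∀ k : ℕ, (β₀ / (θ k) ^ 2) * ‖cProj m n (δ k)‖ ^ 2 ≤ 2 * ε k)
    (hopt : ∀ k : ℕ,
      L • (x (k + 1) - z k + δ k) + (β₀ / (θ k) ^ 2) • cProj m n (x (k + 1) + δ k) = 0)
    (hw0 : w 0 = x 0)
    (hw : ∀ k : ℕ, w (k + 1) = (θ k)⁻¹ • x (k + 1) - ((1 - θ k) / θ k) • x k)
    (ρ ℓsq : ℕ → ℝ)
    (hρ : ∀ k : ℕ, ρ k = f (x k) - f xs + ⟪lam, cProj m n (x k)⟫)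
    (hℓ0 : ℓsq 0 = ‖lam‖ ^ 2 / (2 * β₀) + (L / 2) * ‖x 0 - xs‖ ^ 2)
    (hℓ : ∀ k : ℕ, ℓsq (k + 1) = ρ (k + 1) / (θ k) ^ 2
      + (1 / (2 * β₀)) * ‖(β₀ / (θ k) ^ 2) • cProj m n (x (k + 1)) - lam‖ ^ 2
      + (L / 2) * ‖w (k + 1) - xs‖ ^ 2) :
    ∀ K : ℕ,
      ℓsq (K + 1) ≤ (∑ k ∈ Finset.range (K + 1), 2 * Real.sqrt (ε k) / θ k) ^ 2
        + 2 * ∑ k ∈ Finset.range (K + 1), ε k / (θ k) ^ 2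
        + 2 * ℓsq 0 := by
  have hθ' := theta_pos_le_one hθ0 fun k => ⟨(hθ k).1, (hθ k).2.1⟩
  have hθne : ∀ k, θ k ≠ 0 := fun k => (hθ' k).1.ne'
  set μ := penaltyMultiplier m n β₀ θ x
  have hμ := smul_cProj_eq_smul_penaltyMultiplier (x := x) hβ₀.ne' hθ0 hθne fun k => (hθ k).2.2
  have hμ' k := cProj_succ_eq_smul_penaltyMultiplier (x := x) hβ₀.ne' (hθne k)
  have hℓ' : ∀ k, ℓsq k = (1 - θ k) / θ k ^ 2 * ρ k + 1 / (2 * β₀) * ‖μ k - lam‖ ^ 2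
      + L / 2 * ‖w k - xs‖ ^ 2
    | 0 => by rw [hℓ0, hθ0, hw0]; simp only [μ, penaltyMultiplier, zero_sub, norm_neg]; ring
    | k + 1 => by rw [hℓ k, (hθ k).2.2]; simp only [μ, penaltyMultiplier]; ring
  have hℓnn : ∀ k, 0 ≤ ℓsq k := fun k => by
    have : 0 ≤ ρ k := by
      rw [hρ]; exact lagrangian_gap_nonneg (cProjₗ_isSymmetric m n) hconv hxs hlam (x k)
    have := sub_nonneg.2 (hθ' k).2
    rw [hℓ']
    positivity
  have hstep : ∀ k, ℓsq (k + 1) ≤ ℓsq k + ε k / θ k ^ 2 + 2 * √(ε k) / θ k * √(ℓsq (k + 1)) := by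
    intro k
    rw [hℓ k, hℓ' k]
    exact lyapunov_step (cProjₗ_isSymmetric m n) (cProjₗ_isIdempotentElem m n) hconv hsmooth hL
      hxs hlam (hθ' k).1 (hθ' k).2 hβ₀ (hε k) (extrapolation_eq_convex_comb hθ0 hθne hy hw0 hw k)
      (iterate_succ_eq_convex_comb (hθne k) (hw k)) (hμ k) (hμ' k) (by rw [← hz k]; exact hopt k)
      (hδ2 k) (hδ1 k) (hρ k) (hρ (k + 1))
  intro K
  exact le_sq_sum_add_of_le_add_mul_sqrt hℓnn (fun k => div_nonneg (hε k) (sq_nonneg _))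
    (fun k => div_nonneg (by positivity) (hθ' k).1.le) hstep (K + 1)

theorem stmt8 (m n : ℕ) (hm : 0 < m) (L β₀ : ℝ) (hL : 0 < L) (hβ₀ : 0 < β₀)
    (θ ε : ℕ → ℝ)
    (hθ0 : θ 0 = 1)
    (hθ : ∀ k : ℕ, 0 < θ (k + 1) ∧ θ (k + 1) < 1 ∧
      (1 - θ (k + 1)) / (θ (k + 1)) ^ 2 = 1 / (θ k) ^ 2)
    (hε : ∀ k : ℕ, 0 ≤ ε k)
    (f : EuclideanSpace ℝ (Fin m × Fin n) → ℝ)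
    (gf : EuclideanSpace ℝ (Fin m × Fin n) → EuclideanSpace ℝ (Fin m × Fin n))
    -- `f` is convex with gradient `gf`
    (hconv : ∀ a b, f a + ⟪gf a, b - a⟫ ≤ f b)
    -- `f` is `L`-smooth with gradient `gf`
    (hsmooth : ∀ a b, f b ≤ f a + ⟪gf a, b - a⟫ + (L / 2) * ‖b - a‖ ^ 2)
    (xs lam : EuclideanSpace ℝ (Fin m × Fin n))
    (hxs : cProj m n xs = 0) (hlam : gf xs + cProj m n lam = 0)
    (x y z δ w : ℕ → EuclideanSpace ℝ (Fin m × Fin n))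
    -- the extrapolation step (with the convention `x^{−1} = x⁰`, via truncated
    -- subtraction `0 - 1 = 0` on `ℕ`; for `k = 0` the coefficient is `0` since `θ₀ = 1`)
    (hy : ∀ k : ℕ, y k = x k + (θ k * ((1 - θ (k - 1)) / θ (k - 1))) • (x k - x (k - 1)))
    (hz : ∀ k : ℕ, z k = y k - L⁻¹ • gf (y k))
    (hδ1 : ∀ k : ℕ, ‖δ k‖ ≤ Real.sqrt (2 * ε k / L))
    (hδ2 : ∀ k : ℕ, (β₀ / (θ k) ^ 2) * ‖cProj m n (δ k)‖ ^ 2 ≤ 2 * ε k)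
    (hopt : ∀ k : ℕ,
      L • (x (k + 1) - z k + δ k) + (β₀ / (θ k) ^ 2) • cProj m n (x (k + 1) + δ k) = 0)
    (hw0 : w 0 = x 0)
    (hw : ∀ k : ℕ, w (k + 1) = (θ k)⁻¹ • x (k + 1) - ((1 - θ k) / θ k) • x k)
    (ρ ℓsq : ℕ → ℝ)
    (hρ : ∀ k : ℕ, ρ k = f (x k) - f xs + ⟪lam, cProj m n (x k)⟫)
    (hℓ0 : ℓsq 0 = ‖lam‖ ^ 2 / (2 * β₀) + (L / 2) * ‖x 0 - xs‖ ^ 2)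
    (hℓ : ∀ k : ℕ, ℓsq (k + 1) = ρ (k + 1) / (θ k) ^ 2
      + (1 / (2 * β₀)) * ‖(β₀ / (θ k) ^ 2) • cProj m n (x (k + 1)) - lam‖ ^ 2
      + (L / 2) * ‖w (k + 1) - xs‖ ^ 2) :
    ∀ K : ℕ,
      ℓsq (K + 1) ≤ (∑ k ∈ Finset.range (K + 1), 2 * Real.sqrt (ε k) / θ k) ^ 2
        + 2 * ∑ k ∈ Finset.range (K + 1), ε k / (θ k) ^ 2
        + 2 * ℓsq 0 :=
  stmt8_general m n L β₀ hL hβ₀ θ ε hθ0 hθ hε f gf hconv hsmooth xs lam hxs hlam x y z δ w hy hz hδ1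
    hδ2 hopt hw0 hw ρ ℓsq hρ hℓ0 hℓ
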